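/- arXiv:1006.4744 — 9 statements merged into one kernel-verified Lean document; each statement's English description precedes it below -/
import Mathlib

section
/- Let k be a natural number with k > 2 and let g : (0,∞) → ℝ be differentiable. If the function r ↦ r^{k−2}·g′(r) is Lebesgue integrable on (0,∞), then lim_{r→0⁺} r^{k−2}·g(r) = 0. -/
/-!
For `0 < r < 1` the fundamental theorem of calculus gives
`r^(k-2) g(r) = r^(k-2) g(1) - ∫_r^1 r^(k-2) g'(t) dt`. On `(r, 1]` the integrand is bounded by
`t^(k-2) |g'(t)|`, which is integrable by hypothesis, and it tends to `0` pointwise as `r → 0⁺`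
because `k - 2 ≥ 1`; dominated convergence finishes the proof.
-/

open MeasureTheory Filter Set Topology

lemma integrableOn_Ioc_of_integrableOn_pow_mul {f : ℝ → ℝ} {n : ℕ} {r b : ℝ} (hr : 0 < r)
    (hf : IntegrableOn (fun t => t ^ n * f t) (Ioc r b)) : IntegrableOn f (Ioc r b) := by
  have hinv : ContinuousOn (fun t : ℝ => (t ^ n)⁻¹) (Icc r b) :=
    (continuousOn_pow n).inv₀ fun t ht => pow_ne_zero n (hr.trans_le ht.1).ne'
  refine (hf.mul_continuousOn_of_subset hinv measurableSet_Ioc isCompact_Icc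
    Ioc_subset_Icc_self).congr_fun (fun t ht => ?_) measurableSet_Ioc
  have : t ^ n ≠ 0 := pow_ne_zero n (hr.trans ht.1).ne'
  field_simp

lemma tendsto_pow_mul_setIntegral_Ioc_nhdsGT_zero {f : ℝ → ℝ} {n : ℕ} (hn : n ≠ 0) {b : ℝ}
    (hf : IntegrableOn (fun t => t ^ n * f t) (Ioc 0 b)) :
    Tendsto (fun r => r ^ n * ∫ t in Ioc r b, f t) (𝓝[>] 0) (𝓝 0) := by
  simp_rw [← integral_const_mul, ← integral_indicator measurableSet_Ioc]
  rw [show 𝓝 (0 : ℝ) = 𝓝 (∫ _ : ℝ, (0 : ℝ)) by simp]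
  refine tendsto_integral_filter_of_dominated_convergence
    (fun t => ‖(Ioc 0 b).indicator (fun t => t ^ n * f t) t‖) ?_ ?_
    (hf.integrable_indicator measurableSet_Ioc).norm ?_
  · filter_upwards [self_mem_nhdsWithin] with r (hr : 0 < r)
    have hfr : IntegrableOn f (Ioc r b) := integrableOn_Ioc_of_integrableOn_pow_mul hr
      (hf.mono_set (Ioc_subset_Ioc_left hr.le))
    exact (IntegrableOn.integrable_indicator (hfr.const_mul _) measurableSet_Ioc).aestronglyMeasurable
  · filter_upwards [self_mem_nhdsWithin] with r (hr : 0 < r)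
    refine ae_of_all _ fun t => ?_
    by_cases ht : t ∈ Ioc r b
    · have ht0 : t ∈ Ioc 0 b := ⟨hr.trans ht.1, ht.2⟩
      rw [indicator_of_mem ht, indicator_of_mem ht0, norm_mul, norm_mul]
      gcongr
      simpa [abs_of_pos hr, abs_of_pos ht0.1] using pow_le_pow_left₀ hr.le ht.1.le n
    · simp [indicator_of_notMem ht]
  · refine ae_of_all _ fun t => squeeze_zero_norm (fun r => norm_indicator_le_norm_self _ _) ?_
    have hcont : Continuous fun r : ℝ => ‖r ^ n * f t‖ := by fun_prop
    simpa [zero_pow hn] using (hcont.tendsto 0).mono_left nhdsWithin_le_nhds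

/-- Lemma 5 ('rand0'): if `k > 2`, `g` is differentiable on `(0,∞)` and
`r ↦ r^(k-2) * g'(r)` is Lebesgue integrable on `(0,∞)`, then
`lim_{r→0⁺} r^(k-2) * g(r) = 0`. -/
theorem stmt0 (k : ℕ) (hk : 2 < k) (g : ℝ → ℝ)
    (hg : DifferentiableOn ℝ g (Set.Ioi 0))
    (hint : IntegrableOn (fun r : ℝ => r ^ (k - 2) * deriv g r) (Set.Ioi 0)) :
    Tendsto (fun r : ℝ => r ^ (k - 2) * g r) (nhdsWithin 0 (Set.Ioi 0)) (nhds 0) := by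
  have hn : k - 2 ≠ 0 := by omega
  have hftc : ∀ r ∈ Ioo (0 : ℝ) 1,
      r ^ (k - 2) * g 1 - r ^ (k - 2) * ∫ t in Ioc r 1, deriv g t = r ^ (k - 2) * g r := by
    intro r ⟨hr0, hr1⟩
    have hderiv : ∀ x ∈ uIcc r 1, DifferentiableAt ℝ g x := fun x hx =>
      hg.differentiableAt (Ioi_mem_nhds (hr0.trans_le (uIcc_of_le hr1.le ▸ hx).1))
    have hint' : IntervalIntegrable (deriv g) volume r 1 :=
      (intervalIntegrable_iff_integrableOn_Ioc_of_le hr1.le).2 <|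
        integrableOn_Ioc_of_integrableOn_pow_mul hr0 (hint.mono_set fun t ht => hr0.trans ht.1)
    rw [← intervalIntegral.integral_of_le hr1.le, intervalIntegral.integral_deriv_eq_sub hderiv hint']
    ring
  have hpow : Tendsto (fun r : ℝ => r ^ (k - 2) * g 1) (𝓝[>] 0) (𝓝 0) := by
    simpa [zero_pow hn] using
      ((continuous_pow (k - 2)).tendsto 0).mono_left nhdsWithin_le_nhds |>.mul_const (g 1)
  have hrem := tendsto_pow_mul_setIntegral_Ioc_nhdsGT_zero hn
    (b := 1) (hint.mono_set fun t ht => ht.1)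
  refine (sub_zero (0 : ℝ) ▸ hpow.sub hrem).congr' ?_
  filter_upwards [Ioo_mem_nhdsGT one_pos] with r hr using hftc r hr
end

section
/- Let t be a natural number, let a ∈ ℝ, and let F, h : ℝ → ℝ be t times continuously differentiable. Then ∑_{k=0}^{t} (−1)^k · binom(t,k) · ( d^{t−k}/du^{t−k} [ F(u)·h^{(k)}(u) ] evaluated at u = a ) = F^{(t)}(a) · h(a). -/
/-!
By the Leibniz rule the left-hand side is a combination of the products
`F^{(i)}(a) h^{(t-i)}(a)`, and the coefficient of the `i`-th one is
`∑ₖ (-1)^k C(t,k) C(t-k,i) = C(t,i) ∑ₖ (-1)^k C(t-i,k)`, which vanishes unless `i = t`.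
-/

open Finset

theorem Nat.choose_mul_choose_sub_comm (n k i : ℕ) :
    n.choose k * (n - k).choose i = n.choose i * (n - i).choose k := by
  rcases le_or_gt (k + i) n with hki | hki
  · have hk := Nat.choose_mul (n := n) (Nat.le_add_right k i)
    have hi := Nat.choose_mul (n := n) (Nat.le_add_left i k)
    rw [Nat.add_sub_cancel_left] at hk
    rw [Nat.add_sub_cancel, ← Nat.choose_symm_add] at hi
    rw [← hk, ← hi]
  · have h1 : n.choose k * (n - k).choose i = 0 := by
      rcases le_or_gt k n with hk | hk
      · rw [Nat.choose_eq_zero_of_lt (by omega : n - k < i), mul_zero]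
      · rw [Nat.choose_eq_zero_of_lt hk, zero_mul]
    have h2 : n.choose i * (n - i).choose k = 0 := by
      rcases le_or_gt i n with hi | hi
      · rw [Nat.choose_eq_zero_of_lt (by omega : n - i < k), mul_zero]
      · rw [Nat.choose_eq_zero_of_lt hi, zero_mul]
    rw [h1, h2]

theorem Int.alternating_sum_range_choose_mul_choose_sub (n i : ℕ) :
    ∑ k ∈ Finset.range (n + 1), ((-1) ^ k * n.choose k * (n - k).choose i : ℤ)
      = if i = n then 1 else 0 := by
  simp_rw [mul_assoc, ← Nat.cast_mul, Nat.choose_mul_choose_sub_comm n _ i, Nat.cast_mul,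
    mul_left_comm _ (n.choose i : ℤ), ← mul_sum]
  rcases le_or_gt i n with hi | hi
  · have hsub : Finset.range (n - i + 1) ⊆ Finset.range (n + 1) :=
      range_subset_range.2 (by omega)
    rw [← sum_subset hsub fun k _ hk => by
      rw [mem_range, not_lt] at hk
      rw [Nat.choose_eq_zero_of_lt (by omega), Nat.cast_zero, mul_zero],
      Int.alternating_sum_range_choose]
    by_cases hin : i = n
    · simp [hin]
    · simp [hin, show n - i ≠ 0 by omega]
  · simp [Nat.choose_eq_zero_of_lt hi, hi.ne']

section

variable {𝕜 F : Type*} [NontriviallyNormedField 𝕜] [NormedAddCommGroup F] [NormedSpace 𝕜 F]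

theorem iteratedDeriv_iteratedDeriv (m k : ℕ) (f : 𝕜 → F) :
    iteratedDeriv m (iteratedDeriv k f) = iteratedDeriv (m + k) f := by
  simp only [iteratedDeriv_eq_iterate, Function.iterate_add_apply]

theorem ContDiff.iteratedDeriv_of_add_le {f : 𝕜 → F} {m n k : ℕ} (hf : ContDiff 𝕜 m f)
    (hnk : n + k ≤ m) : ContDiff 𝕜 n (iteratedDeriv k f) := by
  rw [iteratedDeriv_eq_iterate]
  exact ContDiff.iterate_deriv' n k (hf.of_le (by exact_mod_cast hnk))

end

section

variable {𝕜 𝔸 : Type*} [NontriviallyNormedField 𝕜]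
  [NormedRing 𝔸] [NormedAlgebra 𝕜 𝔸]

theorem iteratedDeriv_sub_fun_mul_iteratedDeriv {f g : 𝕜 → 𝔸} {t k : ℕ}
    (hf : ContDiff 𝕜 t f) (hg : ContDiff 𝕜 t g) (hk : k ≤ t) (x : 𝕜) :
    iteratedDeriv (t - k) (fun u => f u * iteratedDeriv k g u) x
      = ∑ i ∈ range (t + 1),
          ((t - k).choose i : 𝔸) * iteratedDeriv i f x * iteratedDeriv (t - i) g x := by
  rw [iteratedDeriv_fun_mul (hf.of_le (by exact_mod_cast Nat.sub_le t k)).contDiffAt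
    (hg.iteratedDeriv_of_add_le (Nat.sub_add_cancel hk).le).contDiffAt]
  have hsub : range (t - k + 1) ⊆ range (t + 1) := range_subset_range.2 (by omega)
  refine (sum_congr rfl fun i hi => ?_).trans (sum_subset hsub fun i _ hi => ?_)
  · rw [mem_range] at hi
    rw [iteratedDeriv_iteratedDeriv, show t - k - i + k = t - i by omega]
  · rw [mem_range, not_lt] at hi
    rw [Nat.choose_eq_zero_of_lt (by omega), Nat.cast_zero, zero_mul, zero_mul]

theorem sum_neg_one_pow_mul_choose_mul_iteratedDeriv_fun_mul {f g : 𝕜 → 𝔸} {t : ℕ}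
    (hf : ContDiff 𝕜 t f) (hg : ContDiff 𝕜 t g) (x : 𝕜) :
    ∑ k ∈ range (t + 1),
        (-1 : 𝔸) ^ k * (t.choose k) *
          iteratedDeriv (t - k) (fun u => f u * iteratedDeriv k g u) x
      = iteratedDeriv t f x * g x := by
  calc _ = ∑ k ∈ range (t + 1), ∑ i ∈ range (t + 1), (-1 : 𝔸) ^ k * (t.choose k) *
          (((t - k).choose i : 𝔸) * iteratedDeriv i f x * iteratedDeriv (t - i) g x) := by
        refine sum_congr rfl fun k hk => ?_
        rw [iteratedDeriv_sub_fun_mul_iteratedDeriv hf hg (mem_range_succ_iff.1 hk), mul_sum]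
    _ = ∑ i ∈ range (t + 1),
          Int.cast (R := 𝔸) (∑ k ∈ range (t + 1), (-1) ^ k * t.choose k * (t - k).choose i) *
            (iteratedDeriv i f x * iteratedDeriv (t - i) g x) := by
        rw [sum_comm]
        refine sum_congr rfl fun i _ => ?_
        rw [Int.cast_sum, sum_mul]
        push_cast
        simp only [mul_assoc]
    _ = iteratedDeriv t f x * g x := by
        simp only [Int.alternating_sum_range_choose_mul_choose_sub, Int.cast_ite, Int.cast_one,
          Int.cast_zero, ite_mul, one_mul, zero_mul, sum_ite_eq', self_mem_range_succ, if_true,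
          Nat.sub_self, iteratedDeriv_zero]

end

/-- The scalar Leibniz/binomial-inversion identity behind Lemma 7 ('xkwad'):
`∑_{k=0}^{t} (−1)^k C(t,k) (d/du)^{t−k}[F(u)·h^{(k)}(u)]|_{u=a} = F^{(t)}(a)·h(a)`. -/
theorem stmt1 (t : ℕ) (a : ℝ) (F h : ℝ → ℝ)
    (hF : ContDiff ℝ t F) (hh : ContDiff ℝ t h) :
    ∑ k ∈ Finset.range (t + 1),
        (-1 : ℝ) ^ k * (t.choose k) *
          iteratedDeriv (t - k) (fun u => F u * iteratedDeriv k h u) a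
      = iteratedDeriv t F a * h a :=
  sum_neg_one_pow_mul_choose_mul_iteratedDeriv_fun_mul hF hh a
end

section
/- Let m, n be natural numbers with m ≥ 1 and set M := m − 2n, and assume M > 0. Let f : [0,∞) → ℝ be n times continuously differentiable such that: (a) for every 0 ≤ j ≤ n, the function r ↦ r^{M+2j−1}·f^{(j)}(r²) is Lebesgue integrable on (0,∞); (b) for every 0 ≤ j ≤ n−1, lim_{r→∞} r^{M+2j}·f^{(j)}(r²) = 0. Then (−1)^n · π^{−n} · ∫_{ℝ^m} f^{(n)}(|x|²) dx = ∫_{ℝ^M} f(|y|²) dy, where both integrals are Lebesgue integrals over Euclidean space and |·| denotes the Euclidean norm. -/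
/-!
In polar coordinates, `∫_{ℝ^k} g(|x|²) dx = k·|B^k|·∫₀^∞ r^{k-1} g(r²) dr`. Integrating by parts in
`r` (with `d/dr [r^{k-1} g(r²)/2] = (k-1)/2 · r^{k-2} g(r²) + r^k g'(r²)`, boundary terms vanishing by
the decay hypothesis) gives `∫₀^∞ r^{k+1} g'(r²) dr = -(k/2) ∫₀^∞ r^{k-1} g(r²) dr`, and the ball
volumes satisfy `(k+2)|B^{k+2}| = 2π|B^k|`. Together, `∫_{ℝ^{k+2}} g'(|x|²) dx = -π ∫_{ℝ^k} g(|y|²) dy`;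
applying this `n` times to `g = f^{(n-1)}, …, f` lowers the dimension from `m` to `m - 2n`.
-/

open MeasureTheory Filter Set Metric Topology

theorem EuclideanSpace.mul_volume_real_ball_fin_add_three (d : ℕ) :
    ((d : ℝ) + 3) * volume.real (ball (0 : EuclideanSpace ℝ (Fin (d + 3))) 1)
      = 2 * Real.pi * volume.real (ball (0 : EuclideanSpace ℝ (Fin (d + 1))) 1) := by
  have hΓ : Real.Gamma (((d + 3 : ℕ) : ℝ) / 2 + 1)
      = ((d : ℝ) + 3) / 2 * Real.Gamma (((d + 1 : ℕ) : ℝ) / 2 + 1) := by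
    rw [Real.Gamma_add_one (by positivity)]
    push_cast
    ring_nf
  have hsqrt : Real.sqrt Real.pi ^ (d + 3) = Real.sqrt Real.pi ^ (d + 1) * Real.pi := by
    rw [pow_add _ (d + 1) 2, Real.sq_sqrt Real.pi_pos.le]
  simp only [measureReal_def, EuclideanSpace.volume_ball, Fintype.card_fin, ENNReal.ofReal_one,
    one_pow, one_mul]
  rw [ENNReal.toReal_ofReal (by positivity), ENNReal.toReal_ofReal (by positivity), hΓ, hsqrt]
  field_simp

theorem integral_comp_norm_sq_euclideanSpace (d : ℕ) (g : ℝ → ℝ) :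
    ∫ x : EuclideanSpace ℝ (Fin (d + 1)), g (‖x‖ ^ 2)
      = (d + 1) * volume.real (ball (0 : EuclideanSpace ℝ (Fin (d + 1))) 1)
        * ∫ r in Ioi 0, r ^ d * g (r ^ 2) := by
  rw [integral_fun_norm_addHaar volume (fun r => g (r ^ 2))]
  simp [mul_assoc]

theorem integral_Ioi_pow_mul_derivWithin_comp_sq (a : ℕ) {g : ℝ → ℝ}
    (hg : ContDiffOn ℝ 1 g (Ici 0))
    (hint : IntegrableOn (fun r : ℝ => r ^ a * g (r ^ 2)) (Ioi 0))
    (hint' : IntegrableOn (fun r : ℝ => r ^ (a + 2) * derivWithin g (Ici 0) (r ^ 2)) (Ioi 0))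
    (hlim : Tendsto (fun r : ℝ => r ^ (a + 1) * g (r ^ 2)) atTop (𝓝 0)) :
    ∫ r in Ioi 0, r ^ (a + 2) * derivWithin g (Ici 0) (r ^ 2)
      = -((a + 1) / 2) * ∫ r in Ioi 0, r ^ a * g (r ^ 2) := by
  set F : ℝ → ℝ := fun r => r ^ (a + 1) * g (r ^ 2) / 2
  have hF : ∀ r ∈ Ioi (0 : ℝ), HasDerivAt F
      ((a + 1) / 2 * (r ^ a * g (r ^ 2)) + r ^ (a + 2) * derivWithin g (Ici 0) (r ^ 2)) r := by
    intro r (hr : 0 < r)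
    have hnhds : Ici (0 : ℝ) ∈ 𝓝 (r ^ 2) := Ici_mem_nhds (by positivity)
    have hg' : HasDerivAt g (derivWithin g (Ici 0) (r ^ 2)) (r ^ 2) := by
      rw [derivWithin_of_mem_nhds hnhds]
      exact ((hg.contDiffAt hnhds).differentiableAt one_ne_zero).hasDerivAt
    refine (((hasDerivAt_pow (a + 1) r).mul
      (hg'.comp (h := fun x : ℝ => x ^ 2) r (hasDerivAt_pow 2 r))).div_const 2).congr_deriv ?_
    simp only [Function.comp_apply, Nat.add_sub_cancel]
    push_cast
    ring
  have hF0 : ContinuousWithinAt F (Ici 0) 0 :=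
    (((continuous_pow _).continuousOn.mul (hg.continuousOn.comp (continuous_pow 2).continuousOn
      fun r _ => sq_nonneg r)).div_const 2) 0 self_mem_Ici
  have hFtop : Tendsto F atTop (𝓝 0) := by simpa using hlim.div_const 2
  have hFzero : F 0 = 0 := by simp [F]
  have key := integral_Ioi_of_hasDerivAt_of_tendsto hF0 hF ((hint.const_mul _).add hint') hFtop
  rw [integral_add (hint.const_mul _) hint', integral_const_mul, hFzero, sub_zero] at key
  linarith

theorem integral_derivWithin_comp_norm_sq_euclideanSpace (d : ℕ) {g : ℝ → ℝ}
    (hg : ContDiffOn ℝ 1 g (Ici 0))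
    (hint : IntegrableOn (fun r : ℝ => r ^ d * g (r ^ 2)) (Ioi 0))
    (hint' : IntegrableOn (fun r : ℝ => r ^ (d + 2) * derivWithin g (Ici 0) (r ^ 2)) (Ioi 0))
    (hlim : Tendsto (fun r : ℝ => r ^ (d + 1) * g (r ^ 2)) atTop (𝓝 0)) :
    ∫ x : EuclideanSpace ℝ (Fin (d + 3)), derivWithin g (Ici 0) (‖x‖ ^ 2)
      = -Real.pi * ∫ y : EuclideanSpace ℝ (Fin (d + 1)), g (‖y‖ ^ 2) := by
  rw [integral_comp_norm_sq_euclideanSpace (d + 2), integral_comp_norm_sq_euclideanSpace d,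
    integral_Ioi_pow_mul_derivWithin_comp_sq d hg hint hint' hlim]
  have hvol := EuclideanSpace.mul_volume_real_ball_fin_add_three d
  push_cast at hvol ⊢
  linear_combination (-((d : ℝ) + 1) / 2 * ∫ r in Ioi 0, r ^ d * g (r ^ 2)) * hvol

theorem integral_iteratedDerivWithin_comp_norm_sq_euclideanSpace (d n : ℕ) {f : ℝ → ℝ}
    (hf : ContDiffOn ℝ n f (Ici 0))
    (hint : ∀ j ≤ n, IntegrableOn
      (fun r : ℝ => r ^ (d + 2 * j) * iteratedDerivWithin j f (Ici 0) (r ^ 2)) (Ioi 0))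
    (hlim : ∀ j < n, Tendsto
      (fun r : ℝ => r ^ (d + 2 * j + 1) * iteratedDerivWithin j f (Ici 0) (r ^ 2)) atTop (𝓝 0)) :
    ((-1) ^ n / Real.pi ^ n) *
        ∫ x : EuclideanSpace ℝ (Fin (d + 2 * n + 1)), iteratedDerivWithin n f (Ici 0) (‖x‖ ^ 2)
      = ∫ y : EuclideanSpace ℝ (Fin (d + 1)), f (‖y‖ ^ 2) := by
  induction n with
  | zero => simp
  | succ n ih =>
    obtain ⟨hfn, hf1⟩ :=
      (contDiffOn_nat_succ_iff_contDiffOn_one_iteratedDerivWithin (uniqueDiffOn_Ici 0)).1 hf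
    have hint_succ := hint (n + 1) le_rfl
    rw [iteratedDerivWithin_succ, show d + 2 * (n + 1) = d + 2 * n + 2 by ring] at hint_succ
    rw [show d + 2 * (n + 1) + 1 = d + 2 * n + 3 by ring, iteratedDerivWithin_succ,
      integral_derivWithin_comp_norm_sq_euclideanSpace (d + 2 * n) hf1 (hint n n.le_succ)
        hint_succ (hlim n n.lt_succ_self),
      ← ih hfn (fun j hj => hint j (hj.trans n.le_succ))
        (fun j hj => hlim j (hj.trans n.lt_succ_self))]
    field_simp
    ring

theorem stmt3_general (m n : ℕ) (hM : 2 * n < m)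
    (f : ℝ → ℝ) (hf : ContDiffOn ℝ n f (Set.Ici 0))
    (hint : ∀ j ≤ n, IntegrableOn
      (fun r : ℝ => r ^ (m - 2 * n + 2 * j - 1) * iteratedDerivWithin j f (Set.Ici 0) (r ^ 2))
      (Set.Ioi 0))
    (hlim : ∀ j < n, Tendsto
      (fun r : ℝ => r ^ (m - 2 * n + 2 * j) * iteratedDerivWithin j f (Set.Ici 0) (r ^ 2))
      atTop (nhds 0)) :
    ((-1 : ℝ) ^ n / Real.pi ^ n) *
        ∫ x : EuclideanSpace ℝ (Fin m), iteratedDerivWithin n f (Set.Ici 0) (‖x‖ ^ 2)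
      = ∫ y : EuclideanSpace ℝ (Fin (m - 2 * n)), f (‖y‖ ^ 2) := by
  obtain ⟨d, rfl⟩ : ∃ d, m = d + 2 * n + 1 := ⟨m - 2 * n - 1, by omega⟩
  have hdim : d + 2 * n + 1 - 2 * n = d + 1 := by omega
  have hexp : ∀ j, d + 2 * n + 1 - 2 * n + 2 * j - 1 = d + 2 * j := fun j => by omega
  have hexp' : ∀ j, d + 2 * n + 1 - 2 * n + 2 * j = d + 2 * j + 1 := fun j => by omega
  simp only [hexp] at hint
  simp only [hexp'] at hlim
  rw [hdim]
  exact integral_iteratedDerivWithin_comp_norm_sq_euclideanSpace d n hf hint hlim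

/-- Theorem 3 ('dimensional reduction of Berezin integrals'), case `M = m − 2n > 0`:
`(−1)^n π^{−n} ∫_{ℝ^m} f^{(n)}(|x|²) dx = ∫_{ℝ^M} f(|y|²) dy`. -/
theorem stmt3 (m n : ℕ) (hm : 1 ≤ m) (hM : 2 * n < m)
    (f : ℝ → ℝ) (hf : ContDiffOn ℝ n f (Set.Ici 0))
    (hint : ∀ j ≤ n, IntegrableOn
      (fun r : ℝ => r ^ (m - 2 * n + 2 * j - 1) * iteratedDerivWithin j f (Set.Ici 0) (r ^ 2))
      (Set.Ioi 0))
    (hlim : ∀ j < n, Tendsto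
      (fun r : ℝ => r ^ (m - 2 * n + 2 * j) * iteratedDerivWithin j f (Set.Ici 0) (r ^ 2))
      atTop (nhds 0)) :
    ((-1 : ℝ) ^ n / Real.pi ^ n) *
        ∫ x : EuclideanSpace ℝ (Fin m), iteratedDerivWithin n f (Set.Ici 0) (‖x‖ ^ 2)
      = ∫ y : EuclideanSpace ℝ (Fin (m - 2 * n)), f (‖y‖ ^ 2) :=
  stmt3_general m n hM f hf hint hlim
end

section
/- Let m, n be natural numbers with m ≥ 2 even, and set M := m − 2n; assume M ≤ 0 (so M is a nonpositive even integer) and set k := −M/2. Let f : [0,∞) → ℝ be n times continuously differentiable such that: (a) for every k+1 ≤ j ≤ n, the function r ↦ r^{M+2j−1}·f^{(j)}(r²) is Lebesgue integrable on (0,∞); (b) for every k ≤ j ≤ n−1, lim_{r→∞} r^{M+2j}·f^{(j)}(r²) = 0. Then (−1)^n · π^{−n} · ∫_{ℝ^m} f^{(n)}(|x|²) dx = (−1)^k · π^{−k} · f^{(k)}(0). -/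
/-!
In polar coordinates `∫_{ℝ^{2p}} F(|x|²) dx = 2π^p/(p-1)! · ∫_0^∞ r^{2p-1} F(r²) dr`.
Integrating `d/dr (r^{2q} f^{(k+q)}(r²))` over `(0, ∞)` trades `r^{2q+1} f^{(k+q+1)}(r²)` for
`-q · r^{2q-1} f^{(k+q)}(r²)`; the boundary terms vanish by the decay hypothesis at `∞` and by the
factor `r^{2q}` at `0`, except in the last step `q = 0`, which leaves `-f^{(k)}(0)/2`. Hence
`∫_0^∞ r^{2p-1} f^{(n)}(r²) dr = (-1)^p (p-1)! f^{(k)}(0) / 2`, and the powers of `π` and `-1`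
combine to the claim.
-/

open MeasureTheory Filter Set Topology

section RadialIntegrationByParts

variable {G G' : ℝ → ℝ}

theorem hasDerivAt_pow_mul_comp_sq (e : ℕ) {r : ℝ} (hG : HasDerivAt G (G' (r ^ 2)) (r ^ 2)) :
    HasDerivAt (fun r => r ^ e * G (r ^ 2))
      (e * (r ^ (e - 1) * G (r ^ 2)) + 2 * (r ^ (e + 1) * G' (r ^ 2))) r := by
  have hsq : HasDerivAt (fun r : ℝ => r ^ 2) (2 * r) r := by simpa using hasDerivAt_pow 2 r
  refine ((hasDerivAt_pow e r).fun_mul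
    (HasDerivAt.comp (h := fun r : ℝ => r ^ 2) r hG hsq)).congr_deriv ?_
  simp only [Function.comp_apply]
  ring

theorem integral_Ioi_deriv_pow_mul_comp_sq (e : ℕ) (hGc : ContinuousWithinAt G (Ici 0) 0)
    (hG : ∀ t, 0 < t → HasDerivAt G (G' t) t)
    (hint : IntegrableOn (fun r => e * (r ^ (e - 1) * G (r ^ 2)) + 2 * (r ^ (e + 1) * G' (r ^ 2)))
      (Ioi 0))
    (hlim : Tendsto (fun r => r ^ e * G (r ^ 2)) atTop (𝓝 0)) :
    ∫ r in Ioi 0, (e * (r ^ (e - 1) * G (r ^ 2)) + 2 * (r ^ (e + 1) * G' (r ^ 2)))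
      = -((0 : ℝ) ^ e * G 0) := by
  have hcont : ContinuousWithinAt (fun r : ℝ => r ^ e * G (r ^ 2)) (Ici 0) 0 := by
    refine (continuous_pow e).continuousWithinAt.mul ?_
    refine ContinuousWithinAt.comp (t := Ici 0) (by simpa using hGc)
      (continuous_pow 2).continuousWithinAt fun r (hr : 0 ≤ r) => pow_nonneg hr 2
  rw [integral_Ioi_of_hasDerivAt_of_tendsto hcont
    (fun r hr => hasDerivAt_pow_mul_comp_sq e (hG _ (pow_pos hr 2))) hint hlim]
  simp

theorem integral_Ioi_mul_deriv_comp_sq (hGc : ContinuousWithinAt G (Ici 0) 0)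
    (hG : ∀ t, 0 < t → HasDerivAt G (G' t) t)
    (hint : IntegrableOn (fun r => r * G' (r ^ 2)) (Ioi 0))
    (hlim : Tendsto (fun r => G (r ^ 2)) atTop (𝓝 0)) :
    ∫ r in Ioi 0, r * G' (r ^ 2) = -G 0 / 2 := by
  have h := integral_Ioi_deriv_pow_mul_comp_sq 0 hGc hG
    (by simpa [IntegrableOn] using hint.const_mul 2) (by simpa using hlim)
  simp only [CharP.cast_eq_zero, zero_mul, zero_add, pow_one, integral_const_mul, pow_zero,
    one_mul] at h
  linarith

theorem integral_Ioi_pow_mul_deriv_comp_sq (q : ℕ) (hGc : ContinuousWithinAt G (Ici 0) 0)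
    (hG : ∀ t, 0 < t → HasDerivAt G (G' t) t)
    (hintG : IntegrableOn (fun r => r ^ (2 * q + 1) * G (r ^ 2)) (Ioi 0))
    (hintG' : IntegrableOn (fun r => r ^ (2 * q + 3) * G' (r ^ 2)) (Ioi 0))
    (hlim : Tendsto (fun r => r ^ (2 * q + 2) * G (r ^ 2)) atTop (𝓝 0)) :
    ∫ r in Ioi 0, r ^ (2 * q + 3) * G' (r ^ 2)
      = -(q + 1) * ∫ r in Ioi 0, r ^ (2 * q + 1) * G (r ^ 2) := by
  have hint₁ : IntegrableOn (fun r => ((2 * q + 2 : ℕ) : ℝ) * (r ^ (2 * q + 2 - 1) * G (r ^ 2)))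
      (Ioi 0) := hintG.const_mul _
  have h := integral_Ioi_deriv_pow_mul_comp_sq (2 * q + 2) hGc hG
    (hint₁.add (hintG'.const_mul 2)) hlim
  rw [integral_add hint₁ (hintG'.const_mul 2), integral_const_mul, integral_const_mul,
    show 2 * q + 2 - 1 = 2 * q + 1 by omega, zero_pow (by omega), zero_mul, neg_zero] at h
  push_cast at h
  linarith

theorem integral_Ioi_odd_pow_mul_comp_sq_eq_factorial (g : ℕ → ℝ → ℝ) (N : ℕ)
    (hcont : ∀ j < N, ContinuousWithinAt (g j) (Ici 0) 0)
    (hder : ∀ j < N, ∀ t, 0 < t → HasDerivAt (g j) (g (j + 1) t) t)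
    (hint : ∀ j < N, IntegrableOn (fun r => r ^ (2 * j + 1) * g (j + 1) (r ^ 2)) (Ioi 0))
    (hlim : ∀ j < N, Tendsto (fun r => r ^ (2 * j) * g j (r ^ 2)) atTop (𝓝 0))
    (q : ℕ) (hq : q < N) :
    ∫ r in Ioi 0, r ^ (2 * q + 1) * g (q + 1) (r ^ 2)
      = (-1) ^ (q + 1) * q.factorial * g 0 0 / 2 := by
  induction q with
  | zero =>
    have h := integral_Ioi_mul_deriv_comp_sq (hcont 0 hq) (hder 0 hq) (by simpa using hint 0 hq)
      (by simpa using hlim 0 hq)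
    simpa [neg_div] using h
  | succ q ih =>
    rw [show 2 * (q + 1) + 1 = 2 * q + 3 by ring,
      integral_Ioi_pow_mul_deriv_comp_sq q (hcont (q + 1) hq) (hder (q + 1) hq) (hint q (by omega))
      (hint (q + 1) hq) (hlim (q + 1) hq), ih (by omega), Nat.factorial_succ]
    push_cast
    ring

end RadialIntegrationByParts

theorem ContDiffOn.hasDerivAt_iteratedDerivWithin {𝕜 F : Type*} [NontriviallyNormedField 𝕜]
    [NormedAddCommGroup F] [NormedSpace 𝕜 F] {f : 𝕜 → F} {s : Set 𝕜} {n : WithTop ℕ∞} {j : ℕ}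
    {t : 𝕜} (hf : ContDiffOn 𝕜 n f s) (hj : (j : WithTop ℕ∞) < n) (hs : UniqueDiffOn 𝕜 s)
    (ht : s ∈ 𝓝 t) :
    HasDerivAt (iteratedDerivWithin j f s) (iteratedDerivWithin (j + 1) f s t) t := by
  rw [iteratedDerivWithin_succ]
  exact ((hf.differentiableOn_iteratedDerivWithin hj hs) t
    (mem_of_mem_nhds ht)).hasDerivWithinAt.hasDerivAt ht

open Module in
theorem integral_fun_norm_of_finrank_eq_two_mul_succ {E : Type*} [NormedAddCommGroup E]
    [InnerProductSpace ℝ E] [FiniteDimensional ℝ E] [MeasurableSpace E] [BorelSpace E] {p : ℕ}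
    (hE : finrank ℝ E = 2 * (p + 1)) (h : ℝ → ℝ) :
    ∫ x : E, h ‖x‖ = 2 * Real.pi ^ (p + 1) / p.factorial * ∫ r in Ioi 0, r ^ (2 * p + 1) * h r := by
  have : Nontrivial E := nontrivial_of_finrank_pos (R := ℝ) (by omega)
  rw [integral_fun_norm_addHaar, measureReal_def,
    InnerProductSpace.volume_ball_of_dim_even hE, hE, Nat.factorial_succ]
  simp only [ENNReal.ofReal_one, one_pow, one_mul, smul_eq_mul, nsmul_eq_mul]
  rw [ENNReal.toReal_ofReal (by positivity), show 2 * (p + 1) - 1 = 2 * p + 1 by omega]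
  push_cast
  field_simp

theorem stmt4_general (m n k : ℕ) (hm : 2 ≤ m) (hme : Even m)
    (hk : m + 2 * k = 2 * n)
    (f : ℝ → ℝ) (hf : ContDiffOn ℝ n f (Set.Ici 0))
    (hint : ∀ j : ℕ, k + 1 ≤ j → j ≤ n → IntegrableOn
      (fun r : ℝ => r ^ ((m : ℤ) - 2 * n + 2 * j - 1) * iteratedDerivWithin j f (Set.Ici 0) (r ^ 2))
      (Set.Ioi 0))
    (hlim : ∀ j : ℕ, k ≤ j → j < n → Tendsto
      (fun r : ℝ => r ^ ((m : ℤ) - 2 * n + 2 * j) * iteratedDerivWithin j f (Set.Ici 0) (r ^ 2))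
      atTop (nhds 0)) :
    ((-1 : ℝ) ^ n / Real.pi ^ n) *
        ∫ x : EuclideanSpace ℝ (Fin m), iteratedDerivWithin n f (Set.Ici 0) (‖x‖ ^ 2)
      = ((-1 : ℝ) ^ k / Real.pi ^ k) * iteratedDerivWithin k f (Set.Ici 0) 0 := by
  obtain ⟨l, hl⟩ := hme
  obtain ⟨p, rfl⟩ : ∃ p, m = 2 * (p + 1) := ⟨l - 1, by omega⟩
  obtain rfl : n = k + (p + 1) := by omega
  set g : ℕ → ℝ → ℝ := fun j => iteratedDerivWithin (k + j) f (Ici 0)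
  have hcont : ∀ j < p + 1, ContinuousWithinAt (g j) (Ici 0) 0 := fun j hj =>
    hf.continuousOn_iteratedDerivWithin (by exact_mod_cast (show k + j ≤ k + (p + 1) by omega))
      (uniqueDiffOn_Ici 0) 0 self_mem_Ici
  have hder : ∀ j < p + 1, ∀ t, 0 < t → HasDerivAt (g j) (g (j + 1) t) t := fun j hj t ht =>
    hf.hasDerivAt_iteratedDerivWithin (by exact_mod_cast (show k + j < k + (p + 1) by omega))
      (uniqueDiffOn_Ici 0) (Ici_mem_nhds ht)
  have hint' : ∀ j < p + 1, IntegrableOn (fun r => r ^ (2 * j + 1) * g (j + 1) (r ^ 2))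
      (Ioi 0) := fun j hj => by
    simpa only [show ((2 * (p + 1) : ℕ) : ℤ) - 2 * ((k + (p + 1) : ℕ) : ℤ)
      + 2 * ((k + (j + 1) : ℕ) : ℤ) - 1 = ((2 * j + 1 : ℕ) : ℤ) by push_cast; ring,
      zpow_natCast] using hint (k + (j + 1)) (by omega) (by omega)
  have hlim' : ∀ j < p + 1, Tendsto (fun r => r ^ (2 * j) * g j (r ^ 2)) atTop (𝓝 0) :=
    fun j hj => by
    simpa only [show ((2 * (p + 1) : ℕ) : ℤ) - 2 * ((k + (p + 1) : ℕ) : ℤ)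
      + 2 * ((k + j : ℕ) : ℤ) = ((2 * j : ℕ) : ℤ) by push_cast; ring,
      zpow_natCast] using hlim (k + j) (by omega) (by omega)
  rw [integral_fun_norm_of_finrank_eq_two_mul_succ (finrank_euclideanSpace_fin)
    (fun r => g (p + 1) (r ^ 2)),
    integral_Ioi_odd_pow_mul_comp_sq_eq_factorial g (p + 1) hcont hder hint' hlim' p (lt_add_one p)]
  have hsign : (-1 : ℝ) ^ (k + (p + 1)) * (-1) ^ (p + 1) = (-1) ^ k := by
    rw [pow_add, mul_assoc, ← pow_add, Even.neg_one_pow ⟨_, rfl⟩, mul_one]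
  rw [← hsign, show g 0 0 = iteratedDerivWithin k f (Ici 0) 0 from rfl]
  field_simp
  ring

/-- Theorem 3 ('dimensional reduction of Berezin integrals'), case `M = m − 2n ∈ −2ℕ`
(`m` even, `k = −M/2`):
`(−1)^n π^{−n} ∫_{ℝ^m} f^{(n)}(|x|²) dx = (−1)^k π^{−k} f^{(k)}(0)`. -/
theorem stmt4 (m n k : ℕ) (hm : 2 ≤ m) (hme : Even m)
    (hM : (m : ℤ) - 2 * n ≤ 0) (hk : m + 2 * k = 2 * n)
    (f : ℝ → ℝ) (hf : ContDiffOn ℝ n f (Set.Ici 0))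
    (hint : ∀ j : ℕ, k + 1 ≤ j → j ≤ n → IntegrableOn
      (fun r : ℝ => r ^ ((m : ℤ) - 2 * n + 2 * j - 1) * iteratedDerivWithin j f (Set.Ici 0) (r ^ 2))
      (Set.Ioi 0))
    (hlim : ∀ j : ℕ, k ≤ j → j < n → Tendsto
      (fun r : ℝ => r ^ ((m : ℤ) - 2 * n + 2 * j) * iteratedDerivWithin j f (Set.Ici 0) (r ^ 2))
      atTop (nhds 0)) :
    ((-1 : ℝ) ^ n / Real.pi ^ n) *
        ∫ x : EuclideanSpace ℝ (Fin m), iteratedDerivWithin n f (Set.Ici 0) (‖x‖ ^ 2)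
      = ((-1 : ℝ) ^ k / Real.pi ^ k) * iteratedDerivWithin k f (Set.Ici 0) 0 :=
  stmt4_general m n k hm hme hk f hf hint hlim
end

section
/- Let m be a natural number with m > 2 and let u : (0,∞) → ℝ be continuously differentiable. Suppose the functions r ↦ r^{m−1}·u′(r²) and r ↦ r^{m−3}·u(r²) are Lebesgue integrable on (0,∞) and that lim_{r→∞} r^{m−2}·u(r²) = 0. Then ∫_0^∞ r^{m−1}·u′(r²) dr = −((m−2)/2) · ∫_0^∞ r^{m−3}·u(r²) dr; in particular the boundary term at the origin vanishes automatically: lim_{r→0⁺} r^{m−2}·u(r²) = 0. -/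
/-!
With `g(r) = r^{m-2} u(r²)` one has `g' = (m-2) r^{m-3} u(r²) + 2 r^{m-1} u'(r²)`, which is
integrable on `(0,∞)`; so `g` has limits at both ends and the identity is the fundamental theorem
of calculus once the limit `L` of `g` at `0⁺` is known to vanish. If `L ≠ 0`, then
`r^{m-3} u(r²) = g(r)/r` is bounded below in norm by `|L|/(2r)` near `0`, contradicting its
integrability there, since `1/r` is the derivative of `log r`, which is unbounded at `0⁺`.
-/

open MeasureTheory Filter Set Topology Asymptotics

theorem tendsto_nhdsGT_of_hasDerivAt_of_integrableOn {E : Type*} [NormedAddCommGroup E]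
    [NormedSpace ℝ E] [CompleteSpace E] {f f' : ℝ → E} {a b : ℝ} (hab : a < b)
    (hderiv : ∀ x ∈ Ioc a b, HasDerivAt f (f' x) x) (hint : IntegrableOn f' (Ioc a b)) :
    Tendsto f (𝓝[>] a) (𝓝 (f b - ∫ x in a..b, f' x)) := by
  have hftc : ∀ x ∈ Ioc a b, f b - ∫ t in x..b, f' t = f x := fun x hx => by
    have hsub : uIcc x b ⊆ Ioc a b := by
      rw [uIcc_of_le hx.2]; exact Icc_subset_Ioc hx.1 le_rfl
    rw [intervalIntegral.integral_eq_sub_of_hasDerivAt (fun t ht => hderiv t (hsub ht))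
      (hint.mono_set hsub).intervalIntegrable, sub_sub_cancel]
  have hprim : Tendsto (fun x => ∫ t in x..b, f' t) (𝓝[>] a) (𝓝 (∫ t in a..b, f' t)) := by
    have hcont := intervalIntegral.continuousOn_primitive_interval_left (f := f') (μ := volume)
      (by rwa [uIcc_of_le hab.le, integrableOn_Icc_iff_integrableOn_Ioc])
      a (left_mem_uIcc (a := a) (b := b))
    rw [uIcc_of_le hab.le] at hcont
    refine hcont.mono_left ?_
    rw [← nhdsWithin_Ioc_eq_nhdsGT hab]
    exact nhdsWithin_mono _ Ioc_subset_Icc_self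
  refine (tendsto_const_nhds.sub hprim).congr' ?_
  filter_upwards [Ioc_mem_nhdsGT hab] using hftc

theorem eq_zero_of_tendsto_nhdsGT_zero_of_integrableOn_inv_smul {E : Type*}
    [NormedAddCommGroup E] [NormedSpace ℝ E] {f : ℝ → E} {L : E} {s : Set ℝ}
    (hs : s ∈ 𝓝[>] 0) (hf : Tendsto f (𝓝[>] 0) (𝓝 L))
    (hint : IntegrableOn (fun x => x⁻¹ • f x) s) : L = 0 := by
  by_contra hL
  have hbdd : (fun _ => (1 : ℝ)) =O[𝓝[>] 0] f :=
    (isBigO_const_left_iff_pos_le_norm one_ne_zero).2 ⟨‖L‖ / 2, by positivity,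
      (hf.norm.eventually (lt_mem_nhds (half_lt_self (norm_pos_iff.2 hL)))).mono
        fun _ => le_of_lt⟩
  refine not_integrableOn_of_tendsto_norm_atTop_of_deriv_isBigO_filter (𝓝[>] 0) hs
    (f := Real.log) ?_ ?_ ?_ hint
  · filter_upwards [self_mem_nhdsWithin] with x hx using Real.differentiableAt_log hx.ne'
  · exact tendsto_abs_atBot_atTop.comp Real.tendsto_log_nhdsGT_zero
  · rw [Real.deriv_log']
    simpa using (isBigO_refl (·⁻¹) _).smul hbdd

theorem hasDerivAt_pow_succ_mul_comp_sq {u : ℝ → ℝ} {u' r : ℝ} (n : ℕ)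
    (hu : HasDerivAt u u' (r ^ 2)) :
    HasDerivAt (fun x => x ^ (n + 1) * u (x ^ 2))
      ((n + 1) * (r ^ n * u (r ^ 2)) + 2 * (r ^ (n + 2) * u')) r := by
  have hcomp : HasDerivAt (fun x => u (x ^ 2)) (u' * (2 * r)) r := by
    have hsq : HasDerivAt (fun x : ℝ => x ^ 2) (2 * r) r := by simpa using hasDerivAt_pow 2 r
    exact HasDerivAt.comp (h := fun x : ℝ => x ^ 2) r hu hsq
  refine ((hasDerivAt_pow (n + 1) r).fun_mul hcomp).congr_deriv ?_
  rw [Nat.add_sub_cancel]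
  push_cast
  ring

/-- The partial-integration step in the proof of Theorem 3: for `m > 2` and `u` continuously
differentiable on `(0,∞)` with the stated integrability and decay at infinity,
`∫_0^∞ r^{m−1} u'(r²) dr = −((m−2)/2) ∫_0^∞ r^{m−3} u(r²) dr`, and the boundary term at the
origin vanishes: `lim_{r→0⁺} r^{m−2} u(r²) = 0`. -/
theorem stmt6 (m : ℕ) (hm : 2 < m) (u : ℝ → ℝ)
    (hu : ContDiffOn ℝ 1 u (Set.Ioi 0))
    (h1 : IntegrableOn (fun r : ℝ => r ^ (m - 1) * deriv u (r ^ 2)) (Set.Ioi 0))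
    (h2 : IntegrableOn (fun r : ℝ => r ^ (m - 3) * u (r ^ 2)) (Set.Ioi 0))
    (h3 : Tendsto (fun r : ℝ => r ^ (m - 2) * u (r ^ 2)) atTop (nhds 0)) :
    (∫ r in Set.Ioi (0 : ℝ), r ^ (m - 1) * deriv u (r ^ 2))
        = -(((m : ℝ) - 2) / 2) * ∫ r in Set.Ioi (0 : ℝ), r ^ (m - 3) * u (r ^ 2)
      ∧ Tendsto (fun r : ℝ => r ^ (m - 2) * u (r ^ 2)) (nhdsWithin 0 (Set.Ioi 0)) (nhds 0) := by
  obtain ⟨n, rfl⟩ : ∃ n, m = n + 3 := ⟨m - 3, by omega⟩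
  simp only [show n + 3 - 1 = n + 2 by omega, show n + 3 - 2 = n + 1 by omega,
    Nat.add_sub_cancel] at h1 h2 h3 ⊢
  set g := fun r : ℝ => r ^ (n + 1) * u (r ^ 2)
  have hderiv : ∀ r ∈ Ioi (0 : ℝ), HasDerivAt g
      ((n + 1) * (r ^ n * u (r ^ 2)) + 2 * (r ^ (n + 2) * deriv u (r ^ 2))) r := fun r hr =>
    hasDerivAt_pow_succ_mul_comp_sq n
      ((hu.differentiableOn one_ne_zero).differentiableAt
        (Ioi_mem_nhds (pow_pos hr 2))).hasDerivAt
  have hderiv_integrable : IntegrableOn (fun r : ℝ =>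
      (n + 1) * (r ^ n * u (r ^ 2)) + 2 * (r ^ (n + 2) * deriv u (r ^ 2))) (Ioi 0) :=
    (h2.const_mul _).add (h1.const_mul 2)
  have hlim := tendsto_nhdsGT_of_hasDerivAt_of_integrableOn zero_lt_one
    (fun r hr => hderiv r hr.1) (hderiv_integrable.mono_set Ioc_subset_Ioi_self)
  have hg0 : Tendsto g (𝓝[>] 0) (𝓝 0) := by
    have hquot : EqOn (fun r : ℝ => r ^ n * u (r ^ 2)) (fun r => r⁻¹ • g r) (Ioi 0) :=
      fun r (hr : 0 < r) => by simp only [g, smul_eq_mul, pow_succ]; field_simp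
    rwa [eq_zero_of_tendsto_nhdsGT_zero_of_integrableOn_inv_smul self_mem_nhdsWithin hlim
      (h2.congr_fun hquot measurableSet_Ioi)] at hlim
  have hFTC := integral_Ioi_of_hasDerivAt_of_tendsto
    (continuousWithinAt_Ioi_iff_Ici.1 (by simpa [ContinuousWithinAt, g] using hg0))
    hderiv hderiv_integrable h3
  rw [integral_add (h2.const_mul _) (h1.const_mul 2), integral_const_mul, integral_const_mul]
    at hFTC
  refine ⟨?_, hg0⟩
  push_cast
  simp only [g] at hFTC
  linear_combination hFTC / 2
end

section
/- Let f : [0,∞) → ℝ be continuously differentiable with lim_{v→∞} f(v²) = 0 and such that the function v ↦ (1+v)·v·f′(v²) is Lebesgue integrable on (0,∞). Then lim_{ε→0⁺} (2·π^{ε/2}/Γ(ε/2)) · ∫_0^∞ v^{ε−1}·f(v²) dv = f(0), where Γ denotes the Gamma function. -/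
/-!
Write `g v = f (v²)`. For `0 < ε < 1`, integration by parts gives
`ε ∫₀^∞ v^(ε-1) g = -∫₀^∞ v^ε g'`; the boundary terms vanish since `g` is continuous at `0` and
`g v = O(1/v)` at infinity, because `v |g v| ≤ ∫_v^∞ t |g' t| dt`. Dominated convergence, with
dominant `(1 + v) |g' v|`, sends the right-hand side to `-∫₀^∞ g' = g 0 = f 0`, and
`2 π^(ε/2) / Γ(ε/2) = ε π^(ε/2) / Γ(ε/2 + 1) ~ ε` by the functional equation of `Γ`.
-/

open MeasureTheory Filter Set Real Asymptotics Topology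

theorem integrableOn_Ioi_mul_of_abs_le_one_add {F c : ℝ → ℝ}
    (hF : IntegrableOn (fun v => (1 + v) * F v) (Ioi 0)) (hc : Measurable c)
    (hcF : ∀ v ∈ Ioi (0 : ℝ), |c v| ≤ 1 + v) :
    IntegrableOn (fun v => c v * F v) (Ioi 0) := by
  have hbound : ∀ᵐ v ∂volume.restrict (Ioi (0 : ℝ)), ‖c v / (1 + v)‖ ≤ 1 := by
    filter_upwards [ae_restrict_mem measurableSet_Ioi] with v (hv : 0 < v)
    rw [norm_div, Real.norm_eq_abs, Real.norm_of_nonneg (by linarith)]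
    exact div_le_one_of_le₀ (hcF v hv) (by linarith)
  have hmeas : Measurable fun v => c v / (1 + v) := hc.div (measurable_const.add measurable_id)
  refine (hF.bdd_mul hmeas.aestronglyMeasurable hbound).congr ?_
  filter_upwards [ae_restrict_mem measurableSet_Ioi] with v (hv : 0 < v)
  field_simp

theorem rpow_le_one_add {v ε : ℝ} (hv : 0 ≤ v) (hε₀ : 0 ≤ ε) (hε₁ : ε ≤ 1) : v ^ ε ≤ 1 + v := by
  have := rpow_one_add_le_one_add_mul_self (s := v - 1) (by linarith) hε₀ hε₁
  rw [add_sub_cancel] at this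
  nlinarith

theorem tendsto_integral_Ioi_rpow_mul {F : ℝ → ℝ}
    (hF : IntegrableOn (fun v => (1 + v) * F v) (Ioi 0)) :
    Tendsto (fun ε : ℝ => ∫ v in Ioi (0 : ℝ), v ^ ε * F v) (𝓝[>] 0)
      (𝓝 (∫ v in Ioi (0 : ℝ), F v)) := by
  have hbound : ∀ ε ∈ Icc (0 : ℝ) 1, ∀ v ∈ Ioi (0 : ℝ), |v ^ ε| ≤ 1 + v := fun ε hε v (hv : 0 < v) => by
    rw [abs_of_nonneg (rpow_nonneg hv.le ε)]
    exact rpow_le_one_add hv.le hε.1 hε.2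
  have hmem : ∀ᶠ ε in 𝓝[>] (0 : ℝ), ε ∈ Icc (0 : ℝ) 1 :=
    mem_of_superset (Ioc_mem_nhdsGT zero_lt_one) Ioc_subset_Icc_self
  refine tendsto_integral_filter_of_dominated_convergence (fun v => ‖(1 + v) * F v‖) ?_ ?_
    hF.norm ?_
  · filter_upwards [hmem] with ε hε
    exact (integrableOn_Ioi_mul_of_abs_le_one_add hF (measurable_id.pow_const ε)
      (hbound ε hε)).aestronglyMeasurable
  · filter_upwards [hmem] with ε hε
    filter_upwards [ae_restrict_mem measurableSet_Ioi] with v hv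
    rw [norm_mul, norm_mul, Real.norm_of_nonneg (by linarith [mem_Ioi.mp hv] : (0 : ℝ) ≤ 1 + v)]
    exact mul_le_mul_of_nonneg_right (hbound ε hε v hv) (norm_nonneg _)
  · filter_upwards [ae_restrict_mem measurableSet_Ioi] with v (hv : 0 < v)
    have : Tendsto (fun ε : ℝ => v ^ ε) (𝓝[>] 0) (𝓝 (v ^ (0 : ℝ))) :=
      ((continuousAt_const_rpow hv.ne').tendsto).mono_left nhdsWithin_le_nhds
    simpa using this.mul_const (F v)

theorem mul_abs_le_integral_of_hasDerivAt {g g' : ℝ → ℝ}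
    (hderiv : ∀ v ∈ Ioi (0 : ℝ), HasDerivAt g (g' v) v) (hg' : IntegrableOn g' (Ioi 0))
    (hvg' : IntegrableOn (fun t => t * g' t) (Ioi 0)) (hlim : Tendsto g atTop (𝓝 0))
    {v : ℝ} (hv : 0 < v) :
    v * |g v| ≤ ∫ t in Ioi (0 : ℝ), |t * g' t| := by
  have hftc : ∫ t in Ioi v, g' t = -g v := by
    rw [integral_Ioi_of_hasDerivAt_of_tendsto (hderiv v hv).continuousAt.continuousWithinAt
      (fun t ht => hderiv t (hv.trans ht)) (hg'.mono_set (Ioi_subset_Ioi hv.le)) hlim, zero_sub]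
  calc v * |g v| = v * |∫ t in Ioi v, g' t| := by rw [hftc, abs_neg]
    _ ≤ v * ∫ t in Ioi v, |g' t| := by gcongr; exact abs_integral_le_integral_abs
    _ = ∫ t in Ioi v, v * |g' t| := (integral_const_mul v _).symm
    _ ≤ ∫ t in Ioi v, |t * g' t| := by
      refine setIntegral_mono_on ((hg'.mono_set (Ioi_subset_Ioi hv.le)).abs.const_mul v)
        (hvg'.mono_set (Ioi_subset_Ioi hv.le)).abs measurableSet_Ioi fun t (ht : v < t) => ?_
      rw [abs_mul, abs_of_pos (hv.trans ht)]
      exact mul_le_mul_of_nonneg_right ht.le (abs_nonneg _)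
    _ ≤ ∫ t in Ioi (0 : ℝ), |t * g' t| :=
      setIntegral_mono_set hvg'.abs (Eventually.of_forall fun t => abs_nonneg _)
        (Ioi_subset_Ioi hv.le).eventuallyLE

theorem isBigO_rpow_neg_one_of_hasDerivAt {g g' : ℝ → ℝ}
    (hderiv : ∀ v ∈ Ioi (0 : ℝ), HasDerivAt g (g' v) v) (hg' : IntegrableOn g' (Ioi 0))
    (hvg' : IntegrableOn (fun t => t * g' t) (Ioi 0)) (hlim : Tendsto g atTop (𝓝 0)) :
    g =O[atTop] (· ^ (-1 : ℝ)) := by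
  refine IsBigO.of_bound (∫ t in Ioi (0 : ℝ), |t * g' t|) ?_
  filter_upwards [eventually_gt_atTop 0] with v hv
  rw [rpow_neg_one, Real.norm_eq_abs, norm_inv, Real.norm_of_nonneg hv.le, ← div_eq_mul_inv,
    le_div_iff₀ hv, mul_comm]
  exact mul_abs_le_integral_of_hasDerivAt hderiv hg' hvg' hlim hv

theorem integrableOn_Ioi_rpow_sub_one_mul {g : ℝ → ℝ} (hcont : ContinuousOn g (Ici 0))
    (hO : g =O[atTop] (· ^ (-1 : ℝ))) {ε : ℝ} (hε₀ : 0 < ε) (hε₁ : ε < 1) :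
    IntegrableOn (fun v => v ^ (ε - 1) * g v) (Ioi 0) := by
  have hO₀ : g =O[𝓝[>] 0] (· ^ (-0 : ℝ)) := by
    simpa only [neg_zero, rpow_zero] using
      ((hcont 0 self_mem_Ici).mono Ioi_subset_Ici_self).tendsto.isBigO_one ℝ
  exact mellin_convergent_of_isBigO_scalar
    ((hcont.mono Ioi_subset_Ici_self).locallyIntegrableOn measurableSet_Ioi) hO hε₁ hO₀ hε₀

theorem mul_integral_rpow_sub_one_mul_eq_neg {g g' : ℝ → ℝ} (hcont : ContinuousOn g (Ici 0))
    (hderiv : ∀ v ∈ Ioi (0 : ℝ), HasDerivAt g (g' v) v) (hO : g =O[atTop] (· ^ (-1 : ℝ)))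
    (hint : IntegrableOn (fun v => (1 + v) * g' v) (Ioi 0)) {ε : ℝ} (hε₀ : 0 < ε) (hε₁ : ε < 1) :
    ε * ∫ v in Ioi (0 : ℝ), v ^ (ε - 1) * g v = -∫ v in Ioi (0 : ℝ), v ^ ε * g' v := by
  have hI₁ := integrableOn_Ioi_rpow_sub_one_mul hcont hO hε₀ hε₁
  have hI₂ : IntegrableOn (fun v => v ^ ε * g' v) (Ioi 0) :=
    integrableOn_Ioi_mul_of_abs_le_one_add hint (measurable_id.pow_const ε) fun v (hv : 0 < v) => by
      rw [abs_of_nonneg (rpow_nonneg hv.le ε)]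
      exact rpow_le_one_add hv.le hε₀.le hε₁.le
  have hderiv' : ∀ v ∈ Ioi (0 : ℝ), HasDerivAt (fun w => w ^ ε * g w)
      (ε * (v ^ (ε - 1) * g v) + v ^ ε * g' v) v := fun v (hv : 0 < v) => by
    simpa only [mul_assoc] using (hasDerivAt_rpow_const (Or.inl hv.ne')).fun_mul (hderiv v hv)
  have hcont₀ : ContinuousWithinAt (fun w => w ^ ε * g w) (Ici 0) 0 :=
    (continuousAt_rpow_const 0 ε (Or.inr hε₀.le)).continuousWithinAt.mul (hcont 0 self_mem_Ici)
  have hlim : Tendsto (fun w => w ^ ε * g w) atTop (𝓝 0) := by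
    refine ((isBigO_refl (fun w : ℝ => w ^ ε) atTop).mul hO).trans_tendsto ?_
    refine (tendsto_rpow_neg_atTop (sub_pos.mpr hε₁)).congr' ?_
    filter_upwards [eventually_gt_atTop 0] with w hw
    rw [← rpow_add hw, neg_sub, sub_eq_add_neg]
  have hibp := integral_Ioi_of_hasDerivAt_of_tendsto hcont₀ hderiv' ((hI₁.const_mul ε).add hI₂) hlim
  rw [integral_add (hI₁.const_mul ε) hI₂, integral_const_mul, zero_rpow hε₀.ne', zero_mul,
    sub_zero] at hibp
  linarith

theorem tendsto_mul_integral_rpow_sub_one_mul {g g' : ℝ → ℝ} (hcont : ContinuousOn g (Ici 0))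
    (hderiv : ∀ v ∈ Ioi (0 : ℝ), HasDerivAt g (g' v) v) (hlim : Tendsto g atTop (𝓝 0))
    (hint : IntegrableOn (fun v => (1 + v) * g' v) (Ioi 0)) :
    Tendsto (fun ε => ε * ∫ v in Ioi (0 : ℝ), v ^ (ε - 1) * g v) (𝓝[>] 0) (𝓝 (g 0)) := by
  have hg' : IntegrableOn g' (Ioi 0) := by
    refine (integrableOn_Ioi_mul_of_abs_le_one_add hint measurable_const fun v (hv : 0 < v) => ?_
      ).congr_fun (fun v _ => one_mul (g' v)) measurableSet_Ioi
    rw [abs_one]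
    linarith
  have hvg' : IntegrableOn (fun v => v * g' v) (Ioi 0) :=
    integrableOn_Ioi_mul_of_abs_le_one_add hint measurable_id'
      fun v (hv : 0 < v) => by rw [abs_of_pos hv]; linarith
  have hO := isBigO_rpow_neg_one_of_hasDerivAt hderiv hg' hvg' hlim
  have hftc : ∫ v in Ioi (0 : ℝ), g' v = -g 0 := by
    rw [integral_Ioi_of_hasDerivAt_of_tendsto (hcont 0 self_mem_Ici) hderiv hg' hlim, zero_sub]
  have hlim' := (tendsto_integral_Ioi_rpow_mul hint).neg
  rw [hftc, neg_neg] at hlim'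
  refine hlim'.congr' ?_
  filter_upwards [Ioo_mem_nhdsGT zero_lt_one] with ε ⟨hε₀, hε₁⟩
  exact (mul_integral_rpow_sub_one_mul_eq_neg hcont hderiv hO hint hε₀ hε₁).symm

theorem tendsto_two_mul_pi_rpow_div_Gamma_div_self :
    Tendsto (fun ε => 2 * π ^ (ε / 2) / Gamma (ε / 2) / ε) (𝓝[>] 0) (𝓝 1) := by
  have hΓ : ContinuousAt Gamma 1 := by
    refine (differentiableAt_Gamma fun m hm => ?_).continuousAt
    linarith [(Nat.cast_nonneg m : (0 : ℝ) ≤ m), (by simpa using hm : (1 : ℝ) = -m)]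
  have hcont : ContinuousAt (fun ε : ℝ => π ^ (ε / 2) / Gamma (ε / 2 + 1)) 0 :=
    ((continuousAt_const_rpow pi_ne_zero).comp (continuousAt_id.div_const 2)).div
      (hΓ.comp_of_eq ((continuousAt_id.div_const 2).add continuousAt_const) (by simp)) (by simp)
  have hlim := hcont.tendsto.mono_left (nhdsWithin_le_nhds (s := Ioi 0))
  simp only [zero_div, rpow_zero, zero_add, Gamma_one, div_one] at hlim
  refine hlim.congr' ?_
  filter_upwards [self_mem_nhdsWithin] with ε (hε : 0 < ε)
  rw [Gamma_add_one (by positivity)]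
  field_simp

theorem hasDerivAt_comp_sq {f : ℝ → ℝ} (hf : ContDiffOn ℝ 1 f (Ici 0)) {v : ℝ} (hv : 0 < v) :
    HasDerivAt (fun w => f (w ^ 2)) (2 * v * derivWithin f (Ici 0) (v ^ 2)) v := by
  have hnhds : Ici (0 : ℝ) ∈ 𝓝 (v ^ 2) := Ici_mem_nhds (by positivity)
  have hf' : HasDerivAt f (derivWithin f (Ici 0) (v ^ 2)) (v ^ 2) :=
    ((hf.differentiableOn one_ne_zero _ (sq_nonneg v)).hasDerivWithinAt).hasDerivAt hnhds
  have hsq : HasDerivAt (fun w : ℝ => w ^ 2) (2 * v) v := by simpa using hasDerivAt_pow 2 v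
  exact (HasDerivAt.comp (h := fun w : ℝ => w ^ 2) v hf' hsq).congr_deriv (by ring)

/-- The regularized dimensional-continuation formula for super-dimension `M = 0`:
`lim_{ε→0⁺} (2 π^{ε/2} / Γ(ε/2)) ∫_0^∞ v^{ε−1} f(v²) dv = f(0)`. -/
theorem stmt7 (f : ℝ → ℝ) (hf : ContDiffOn ℝ 1 f (Set.Ici 0))
    (hlim : Tendsto (fun v : ℝ => f (v ^ 2)) atTop (nhds 0))
    (hint : IntegrableOn
      (fun v : ℝ => (1 + v) * v * derivWithin f (Set.Ici 0) (v ^ 2)) (Set.Ioi 0)) :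
    Tendsto (fun ε : ℝ => 2 * Real.pi ^ (ε / 2) / Real.Gamma (ε / 2) *
        ∫ v in Set.Ioi (0 : ℝ), v ^ (ε - 1) * f (v ^ 2))
      (nhdsWithin 0 (Set.Ioi 0)) (nhds (f 0)) := by
  have hcont : ContinuousOn (fun v : ℝ => f (v ^ 2)) (Ici 0) :=
    hf.continuousOn.comp (continuous_pow 2).continuousOn fun v _ => sq_nonneg v
  have hint' : IntegrableOn
      (fun v => (1 + v) * (2 * v * derivWithin f (Ici 0) (v ^ 2))) (Ioi 0) :=
    IntegrableOn.congr_fun (hint.const_mul 2) (fun v _ => by ring) measurableSet_Ioi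
  have hmellin := tendsto_mul_integral_rpow_sub_one_mul hcont
    (fun v hv => hasDerivAt_comp_sq hf hv) hlim hint'
  have hprod := tendsto_two_mul_pi_rpow_div_Gamma_div_self.mul hmellin
  rw [one_mul, zero_pow two_ne_zero] at hprod
  refine hprod.congr' ?_
  filter_upwards [self_mem_nhdsWithin] with ε (hε : 0 < ε)
  field_simp
end

section
/- Let M be a real number and l ≥ 1 an integer. Define the radial Laplace operator L_M acting on twice-differentiable functions φ of one variable r ∈ (0,∞) by (L_M φ)(r) = φ″(r) + ((M−1)/r)·φ′(r). Then the l-fold iterate of L_M annihilates the power function r ↦ r^{2l−M} on (0,∞): (L_M)^l ( r^{2l−M} ) = 0 for all r > 0. -/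
/-! Since `L_M (r^α) = α (α + M - 2) r^(α - 2)` on `(0, ∞)`, the `k`-fold iterate sends `r^α` to
`∏_{j<k} (α - 2j)(α - 2j + M - 2) · r^(α - 2k)`. For `α = 2l - M` the factor `j = l - 1` of the
`l`-fold product is `α - 2(l - 1) + M - 2 = 0`. -/

/-- The radial Laplace operator in (super-)dimension `M`:
`(L_M φ)(r) = φ″(r) + ((M−1)/r) φ′(r)`. -/
noncomputable def radLap (M : ℝ) (φ : ℝ → ℝ) : ℝ → ℝ :=
  fun r => deriv (deriv φ) r + ((M - 1) / r) * deriv φ r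

open Filter Finset Topology

theorem Filter.EventuallyEq.radLap {M x : ℝ} {f g : ℝ → ℝ} (h : f =ᶠ[𝓝 x] g) :
    radLap M f =ᶠ[𝓝 x] radLap M g := by
  filter_upwards [h.deriv, h.deriv.deriv] with r h₁ h₂
  simp only [_root_.radLap, h₁, h₂]

theorem radLap_const_mul (M c : ℝ) (f : ℝ → ℝ) :
    radLap M (fun s => c * f s) = fun r => c * radLap M f r := by
  funext r
  simp only [radLap, deriv_const_mul_field']
  ring

theorem radLap_rpow (M α : ℝ) {r : ℝ} (hr : 0 < r) :
    radLap M (fun s => s ^ α) r = α * (α + M - 2) * r ^ (α - 2) := by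
  have h₁ : r ^ (α - 1) = r ^ (α - 2) * r := by
    rw [← Real.rpow_add_one hr.ne']
    ring_nf
  have h₂ : r ^ (α - 1 - 1) = r ^ (α - 2) := by ring_nf
  simp only [radLap, Real.deriv_rpow_const', deriv_const_mul_field', h₁, h₂]
  field_simp
  ring

theorem iterate_radLap_rpow (M α : ℝ) (k : ℕ) :
    Set.EqOn ((radLap M)^[k] fun s => s ^ α)
      (fun s => (∏ j ∈ range k, (α - 2 * j) * (α - 2 * j + M - 2)) * s ^ (α - 2 * k))
      (Set.Ioi 0) := by
  induction k with
  | zero => intro r _; simp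
  | succ k ih =>
    intro r (hr : 0 < r)
    have hloc := (ih.eventuallyEq_of_mem (Ioi_mem_nhds hr)).radLap (M := M)
    rw [Function.iterate_succ_apply', hloc.eq_of_nhds, radLap_const_mul]
    dsimp only
    rw [radLap_rpow M _ hr, prod_range_succ,
      show α - 2 * k - 2 = α - 2 * ((k + 1 : ℕ) : ℝ) by push_cast; ring]
    ring

/-- The radial computation in Theorem 5 ('fundamental solutions'): the `l`-fold iterate of
the radial Laplace operator `L_M` annihilates `r ↦ r^{2l−M}` on `(0,∞)`. -/
theorem stmt10 (M : ℝ) (l : ℕ) (hl : 1 ≤ l) :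
    ∀ r : ℝ, 0 < r → (radLap M)^[l] (fun s : ℝ => s ^ (2 * (l : ℝ) - M)) r = 0 := by
  intro r hr
  have hfactor : (2 * (l : ℝ) - M - 2 * ((l - 1 : ℕ) : ℝ)) *
      (2 * (l : ℝ) - M - 2 * ((l - 1 : ℕ) : ℝ) + M - 2) = 0 := by
    rw [Nat.cast_sub hl]
    ring
  rw [iterate_radLap_rpow M _ l hr]
  dsimp only
  rw [prod_eq_zero (mem_range.2 (Nat.sub_one_lt_of_lt hl)) hfactor, zero_mul]
end

section
/- Let M be a positive even integer and l ≥ M/2 an integer with l ≥ 1. Define the radial Laplace operator L_M acting on twice-differentiable functions φ of one variable r ∈ (0,∞) by (L_M φ)(r) = φ″(r) + ((M−1)/r)·φ′(r). Then (L_M)^l ( r^{2l−M}·log r ) = 0 for all r > 0. -/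
open Set Real

noncomputable def powLog (a c d : ℝ) : ℝ → ℝ :=
  fun r => (c * log r + d) * r ^ a

theorem hasDerivAt_powLog (a c d : ℝ) {r : ℝ} (hr : 0 < r) :
    HasDerivAt (powLog a c d) (powLog (a - 1) (a * c) (c + a * d) r) r := by
  have h := (((hasDerivAt_log hr.ne').const_mul c).add_const d).mul
    (hasDerivAt_rpow_const (p := a) (Or.inl hr.ne'))
  refine h.congr_deriv ?_
  have hinv : r⁻¹ = r ^ (a - 1) / r ^ a := by
    rw [rpow_sub hr, rpow_one]; field_simp
  simp only [powLog, hinv]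
  field_simp
  ring

theorem radLap_congr {M : ℝ} {f g : ℝ → ℝ} (h : EqOn f g (Ioi 0)) :
    EqOn (radLap M f) (radLap M g) (Ioi 0) := by
  intro r hr
  have he : f =ᶠ[nhds r] g := Filter.eventuallyEq_of_mem (isOpen_Ioi.mem_nhds hr) h
  simp only [radLap, he.deriv.deriv_eq, he.deriv_eq]

theorem iterate_radLap_congr {M : ℝ} {f g : ℝ → ℝ} (h : EqOn f g (Ioi 0)) (j : ℕ) :
    EqOn ((radLap M)^[j] f) ((radLap M)^[j] g) (Ioi 0) := by
  induction j with
  | zero => exact h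
  | succ j ih =>
    simpa only [Function.iterate_succ_apply'] using radLap_congr ih

theorem radLap_powLog (M a c d : ℝ) :
    EqOn (radLap M (powLog a c d))
      (powLog (a - 2) (a * (a + M - 2) * c) ((2 * a + M - 2) * c + a * (a + M - 2) * d))
      (Ioi 0) := by
  intro r (hr : 0 < r)
  have hderiv : deriv (powLog a c d) =ᶠ[nhds r] powLog (a - 1) (a * c) (c + a * d) := by
    filter_upwards [isOpen_Ioi.mem_nhds hr] with x hx
    exact (hasDerivAt_powLog a c d hx).deriv
  have hpow : r ^ (a - 1) = r ^ (a - 2) * r := by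
    rw [show a - 1 = a - 2 + 1 by ring, rpow_add_one hr.ne']
  simp only [radLap, hderiv.deriv_eq, hderiv.eq_of_nhds,
    (hasDerivAt_powLog (a - 1) (a * c) (c + a * d) hr).deriv, powLog,
    show a - 1 - 1 = a - 2 by ring, hpow]
  field_simp [hr.ne']
  ring

theorem radLap_powLog_without_log (M a d : ℝ) :
    EqOn (radLap M (powLog a 0 d)) (powLog (a - 2) 0 (a * (a + M - 2) * d)) (Ioi 0) := by
  simpa only [mul_zero, zero_add] using radLap_powLog M a 0 d

theorem iterate_radLap_rpow_eqOn_zero (M d : ℝ) (i : ℕ) :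
    EqOn ((radLap M)^[i + 1] (powLog (2 - M + 2 * i) 0 d)) 0 (Ioi 0) := by
  induction i generalizing d with
  | zero =>
    intro r hr
    rw [Function.iterate_one, radLap_powLog_without_log M _ d hr]
    simp only [powLog, Nat.cast_zero, Pi.zero_apply]
    ring
  | succ i ih =>
    rw [Function.iterate_succ_apply]
    refine (iterate_radLap_congr (radLap_powLog_without_log M _ d) (i + 1)).trans ?_
    convert ih _ using 4
    push_cast
    ring

theorem iterate_radLap_log_eqOn_zero {M : ℝ} {m : ℕ} (hM : M = 2 * m) (hm : 1 ≤ m) (c d : ℝ) :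
    EqOn ((radLap M)^[m] (powLog 0 c d)) 0 (Ioi 0) := by
  obtain ⟨i, rfl⟩ := Nat.exists_eq_add_of_le' hm
  have hlog : EqOn (radLap M (powLog 0 c d)) (powLog (-2) 0 ((M - 2) * c)) (Ioi 0) := by
    simpa using radLap_powLog M 0 c d
  rw [Function.iterate_succ_apply]
  refine (iterate_radLap_congr hlog i).trans ?_
  rcases i with _ | i
  · intro r _
    simp [powLog, hM]
  · convert iterate_radLap_rpow_eqOn_zero M ((M - 2) * c) i using 4
    rw [hM]
    push_cast
    ring

theorem iterate_radLap_powLog_eqOn_zero {M : ℝ} {m : ℕ} (hM : M = 2 * m) (hm : 1 ≤ m)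
    (k : ℕ) (c d : ℝ) : EqOn ((radLap M)^[k + m] (powLog (2 * k) c d)) 0 (Ioi 0) := by
  induction k generalizing c d with
  | zero => simpa using iterate_radLap_log_eqOn_zero hM hm c d
  | succ k ih =>
    rw [show k + 1 + m = k + m + 1 by omega, Function.iterate_succ_apply]
    refine (iterate_radLap_congr (radLap_powLog M _ c d) (k + m)).trans ?_
    convert ih _ _ using 3
    push_cast
    ring

theorem stmt11_general (M l : ℕ) (hM : Even M) (hMpos : 0 < M) (hl2 : M ≤ 2 * l) :
    ∀ r : ℝ, 0 < r →
      (radLap (M : ℝ))^[l] (fun s : ℝ => s ^ (2 * l - M) * Real.log s) r = 0 := by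
  obtain ⟨m, rfl⟩ := hM
  have hexp : ((2 * l - (m + m) : ℕ) : ℝ) = 2 * (l - m : ℕ) := by
    rw [show 2 * l - (m + m) = 2 * (l - m) by omega]
    push_cast
    ring
  have hf : EqOn (fun s : ℝ => s ^ (2 * l - (m + m)) * log s)
      (powLog (2 * (l - m : ℕ)) 1 0) (Ioi 0) := by
    intro s _
    rw [powLog, ← hexp, rpow_natCast]
    ring
  intro r hr
  rw [iterate_radLap_congr hf l hr]
  have hkill := iterate_radLap_powLog_eqOn_zero (M := ((m + m : ℕ) : ℝ)) (m := m)
    (by push_cast; ring) (by omega) (l - m) 1 0 hr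
  rwa [Nat.sub_add_cancel (by omega)] at hkill

/-- The logarithmic case of Theorem 5 ('fundamental solutions'), radially: for a positive even
integer `M` and `l ≥ M/2`, `l ≥ 1`, the `l`-fold iterate of the radial Laplace operator `L_M`
annihilates `r ↦ r^{2l−M} log r` on `(0,∞)`. -/
theorem stmt11 (M l : ℕ) (hM : Even M) (hMpos : 0 < M) (hl : 1 ≤ l) (hl2 : M ≤ 2 * l) :
    ∀ r : ℝ, 0 < r →
      (radLap (M : ℝ))^[l] (fun s : ℝ => s ^ (2 * l - M) * Real.log s) r = 0 :=
  stmt11_general M l hM hMpos hl2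
end

section
/- Let M ≥ 1 be an integer, k a natural number, E a real number, V : (0,∞) → ℝ a function, and f : (0,∞) → ℝ twice continuously differentiable. Let H : ℝ^M → ℝ be a nonzero polynomial function, homogeneous of degree k and harmonic (ΔH = 0, with Δ the Laplace operator on ℝ^M). Then the following are equivalent: (i) for all x ∈ ℝ^M with x ≠ 0, −(1/2)·Δ( H(x)·f(|x|²) ) + V(|x|²)·H(x)·f(|x|²) = E·H(x)·f(|x|²); (ii) for all u > 0, −2u·f″(u) − (2k + M)·f′(u) + V(u)·f(u) = E·f(u). -/
open MeasureTheory

/-- The `i`-th partial derivative (in the standard coordinate directions) of a function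
on Euclidean space. -/
noncomputable def partialDeriv' {m : ℕ} (i : Fin m) (f : EuclideanSpace ℝ (Fin m) → ℝ)
    (x : EuclideanSpace ℝ (Fin m)) : ℝ :=
  fderiv ℝ f x (EuclideanSpace.single i 1)

/-- The Laplace operator on Euclidean space: the sum of the second partial derivatives
with respect to the standard coordinates. -/
noncomputable def lap {m : ℕ} (f : EuclideanSpace ℝ (Fin m) → ℝ)
    (x : EuclideanSpace ℝ (Fin m)) : ℝ :=
  ∑ i, partialDeriv' i (fun y => partialDeriv' i f y) x

open Filter Topology

theorem MvPolynomial.contDiff_eval_euclideanSpace {M : ℕ} {n : WithTop ℕ∞}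
    (P : MvPolynomial (Fin M) ℝ) :
    ContDiff ℝ n (fun x : EuclideanSpace ℝ (Fin M) => MvPolynomial.eval (fun i => x i) P) := by
  induction P using MvPolynomial.induction_on with
  | C a => simpa using contDiff_const
  | add p q hp hq => simpa using hp.add hq
  | mul_X p i hp => simpa using hp.mul (EuclideanSpace.proj (𝕜 := ℝ) i).contDiff

section Homogeneous

variable {E : Type*} [NormedAddCommGroup E] [NormedSpace ℝ E] {H : E → ℝ} {k : ℕ}

theorem fderiv_apply_self_of_homogeneous {x : E} (hH : DifferentiableAt ℝ H x)
    (hhom : ∀ c : ℝ, H (c • x) = c ^ k * H x) : fderiv ℝ H x x = k * H x := by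
  have hray : HasDerivAt (fun c : ℝ => H (c • x)) (fderiv ℝ H x x) 1 := by
    have hsmul : HasDerivAt (fun c : ℝ => c • x) x 1 := by
      simpa using (hasDerivAt_id (1 : ℝ)).smul_const x
    exact hH.hasFDerivAt.comp_hasDerivAt_of_eq 1 hsmul (one_smul ℝ x).symm
  have hpow : HasDerivAt (fun c : ℝ => c ^ k * H x) (k * H x) 1 := by
    simpa using (hasDerivAt_pow k (1 : ℝ)).mul_const (H x)
  exact (funext hhom ▸ hray).unique hpow

theorem exists_norm_eq_and_ne_zero_of_homogeneous [Nontrivial E]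
    (hhom : ∀ (c : ℝ) (x : E), H (c • x) = c ^ k * H x) (hH0 : H ≠ 0) {r : ℝ} (hr : 0 < r) :
    ∃ x, ‖x‖ = r ∧ H x ≠ 0 := by
  obtain ⟨x₀, hx₀⟩ : ∃ x₀, H x₀ ≠ 0 := by
    by_contra! h
    exact hH0 (funext h)
  by_cases h0 : x₀ = 0
  · obtain ⟨y, hy⟩ := exists_norm_eq E hr.le
    refine ⟨y, hy, fun hHy => hx₀ ?_⟩
    -- `H 0 = H (0 • y) = 0 ^ k * H y`
    rw [h0, ← zero_smul ℝ y, hhom, hHy, mul_zero]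
  · have hc : 0 < r / ‖x₀‖ := div_pos hr (norm_pos_iff.2 h0)
    refine ⟨(r / ‖x₀‖) • x₀, ?_, ?_⟩
    · rw [norm_smul, Real.norm_of_nonneg hc.le, div_mul_cancel₀ _ (norm_ne_zero_iff.2 h0)]
    · rw [hhom]
      exact mul_ne_zero (pow_ne_zero k hc.ne') hx₀

end Homogeneous

section Laplacian

variable {M : ℕ}

theorem sum_mul_partialDeriv' (F : EuclideanSpace ℝ (Fin M) → ℝ) (x : EuclideanSpace ℝ (Fin M)) :
    ∑ i, x i * partialDeriv' i F x = fderiv ℝ F x x := by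
  conv_rhs => arg 2; rw [← (EuclideanSpace.basisFun (Fin M) ℝ).sum_repr x]
  simp [partialDeriv', smul_eq_mul]

theorem partialDeriv'_mul {F G : EuclideanSpace ℝ (Fin M) → ℝ} {y : EuclideanSpace ℝ (Fin M)}
    (hF : DifferentiableAt ℝ F y) (hG : DifferentiableAt ℝ G y) (i : Fin M) :
    partialDeriv' i (fun z => F z * G z) y =
      partialDeriv' i F y * G y + F y * partialDeriv' i G y := by
  have hderiv : HasFDerivAt (fun z => F z * G z) _ y := hF.hasFDerivAt.mul hG.hasFDerivAt
  rw [partialDeriv', hderiv.fderiv]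
  simp only [add_apply, smul_apply, smul_eq_mul, partialDeriv']
  ring

theorem differentiableAt_partialDeriv' {F : EuclideanSpace ℝ (Fin M) → ℝ}
    {x : EuclideanSpace ℝ (Fin M)} (hF : ContDiffAt ℝ 2 F x) (i : Fin M) :
    DifferentiableAt ℝ (partialDeriv' i F) x :=
  ((hF.fderiv_right (m := 1) le_rfl).clm_apply contDiffAt_const).differentiableAt one_ne_zero

theorem lap_mul {F G : EuclideanSpace ℝ (Fin M) → ℝ} {x : EuclideanSpace ℝ (Fin M)}
    (hF : ContDiffAt ℝ 2 F x) (hG : ContDiffAt ℝ 2 G x) :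
    lap (fun y => F y * G y) x =
      lap F x * G x + 2 * ∑ i, partialDeriv' i F x * partialDeriv' i G x + F x * lap G x := by
  have hnear : ∀ᶠ y in 𝓝 x, ContDiffAt ℝ 2 F y ∧ ContDiffAt ℝ 2 G y :=
    (hF.eventually (by simp)).and (hG.eventually (by simp))
  have hfirst (i : Fin M) : partialDeriv' i (fun y => F y * G y) =ᶠ[𝓝 x]
      fun y => partialDeriv' i F y * G y + F y * partialDeriv' i G y := by
    filter_upwards [hnear] with y hy
    exact partialDeriv'_mul (hy.1.differentiableAt two_ne_zero)
      (hy.2.differentiableAt two_ne_zero) i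
  have hsecond (i : Fin M) :
      partialDeriv' i (partialDeriv' i fun y => F y * G y) x =
        partialDeriv' i (partialDeriv' i F) x * G x
          + 2 * (partialDeriv' i F x * partialDeriv' i G x)
          + F x * partialDeriv' i (partialDeriv' i G) x := by
    have hderiv : HasFDerivAt
        (fun y => partialDeriv' i F y * G y + F y * partialDeriv' i G y) _ x :=
      ((differentiableAt_partialDeriv' hF i).hasFDerivAt.mul
        (hG.differentiableAt two_ne_zero).hasFDerivAt).add
      ((hF.differentiableAt two_ne_zero).hasFDerivAt.mul
        (differentiableAt_partialDeriv' hG i).hasFDerivAt)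
    rw [partialDeriv', (hfirst i).fderiv_eq, hderiv.fderiv]
    simp only [add_apply, smul_apply, smul_eq_mul, partialDeriv']
    ring
  simp only [lap, Finset.sum_congr rfl fun i _ => hsecond i, Finset.sum_add_distrib,
    Finset.mul_sum, Finset.sum_mul]

theorem partialDeriv'_comp_norm_sq {f : ℝ → ℝ} {y : EuclideanSpace ℝ (Fin M)}
    (hf : DifferentiableAt ℝ f (‖y‖ ^ 2)) (i : Fin M) :
    partialDeriv' i (fun z => f (‖z‖ ^ 2)) y = 2 * deriv f (‖y‖ ^ 2) * y i := by
  have hderiv : HasFDerivAt (fun z => f (‖z‖ ^ 2)) _ y :=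
    hf.hasDerivAt.comp_hasFDerivAt y (hasStrictFDerivAt_norm_sq y).hasFDerivAt
  rw [partialDeriv', hderiv.fderiv]
  simp only [smul_apply, coe_innerSL_apply, EuclideanSpace.inner_single_right, Real.ringHom_apply,
    one_mul, nsmul_eq_mul, Nat.cast_ofNat, smul_eq_mul]
  ring

theorem lap_comp_norm_sq {f : ℝ → ℝ} {x : EuclideanSpace ℝ (Fin M)}
    (hf : ContDiffAt ℝ 2 f (‖x‖ ^ 2)) :
    lap (fun y => f (‖y‖ ^ 2)) x =
      4 * ‖x‖ ^ 2 * deriv (deriv f) (‖x‖ ^ 2) + 2 * M * deriv f (‖x‖ ^ 2) := by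
  have hnear : ∀ᶠ y in 𝓝 x, ContDiffAt ℝ 2 f (‖y‖ ^ 2) :=
    (continuous_norm.pow 2).continuousAt.eventually (hf.eventually (by simp))
  have hfirst (i : Fin M) : partialDeriv' i (fun y => f (‖y‖ ^ 2)) =ᶠ[𝓝 x]
      fun y => 2 * deriv f (‖y‖ ^ 2) * y i := by
    filter_upwards [hnear] with y hy
    exact partialDeriv'_comp_norm_sq (hy.differentiableAt two_ne_zero) i
  have hf' : DifferentiableAt ℝ (deriv f) (‖x‖ ^ 2) :=
    (hf.derivWithin (m := 1) le_rfl).differentiableAt one_ne_zero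
  have hsecond (i : Fin M) :
      partialDeriv' i (partialDeriv' i fun y => f (‖y‖ ^ 2)) x =
        4 * deriv (deriv f) (‖x‖ ^ 2) * x i ^ 2 + 2 * deriv f (‖x‖ ^ 2) := by
    have hradial : HasFDerivAt (fun y => deriv f (‖y‖ ^ 2))
        (deriv (deriv f) (‖x‖ ^ 2) • 2 • innerSL ℝ x) x :=
      -- elaborated without the expected type, which sends the higher-order unifier astray
      (hf'.hasDerivAt.comp_hasFDerivAt x (hasStrictFDerivAt_norm_sq x).hasFDerivAt :)
    have hcoord : HasFDerivAt (fun y : EuclideanSpace ℝ (Fin M) => y i) _ x :=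
      (EuclideanSpace.proj (𝕜 := ℝ) i).hasFDerivAt
    have hderiv : HasFDerivAt (fun y => 2 * deriv f (‖y‖ ^ 2) * y i) _ x :=
      (hradial.const_mul 2).mul hcoord
    rw [partialDeriv', (hfirst i).fderiv_eq, hderiv.fderiv]
    simp only [add_apply, smul_apply, PiLp.proj_apply, PiLp.single_eq_same, smul_eq_mul, mul_one,
      coe_innerSL_apply, EuclideanSpace.inner_single_right, Real.ringHom_apply, one_mul,
      nsmul_eq_mul, Nat.cast_ofNat]
    ring
  simp only [lap, Finset.sum_congr rfl fun i _ => hsecond i, Finset.sum_add_distrib,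
    ← Finset.mul_sum, ← EuclideanSpace.real_norm_sq_eq, Finset.sum_const, Finset.card_univ,
    Fintype.card_fin, nsmul_eq_mul]
  ring

/-- `Δ (H g) = (Δ H) g + 2 ∇H · ∇g + H Δg` with `g = f(|x|²)`, `∇g = 2 f'(|x|²) x`; harmonicity
kills the first term and Euler's identity `x · ∇H = k H` turns the cross term into
`4 k f'(|x|²) H`. -/
theorem lap_mul_comp_norm_sq_of_harmonic_of_homogeneous {H : EuclideanSpace ℝ (Fin M) → ℝ}
    {f : ℝ → ℝ} {k : ℕ} {x : EuclideanSpace ℝ (Fin M)} (hH : ContDiffAt ℝ 2 H x)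
    (hf : ContDiffAt ℝ 2 f (‖x‖ ^ 2)) (hhom : ∀ c : ℝ, H (c • x) = c ^ k * H x)
    (hharm : lap H x = 0) :
    lap (fun y => H y * f (‖y‖ ^ 2)) x =
      H x * (4 * ‖x‖ ^ 2 * deriv (deriv f) (‖x‖ ^ 2) + (4 * k + 2 * M) * deriv f (‖x‖ ^ 2)) := by
  have hg : ContDiffAt ℝ 2 (fun y => f (‖y‖ ^ 2)) x :=
    hf.comp x (contDiff_norm_sq ℝ).contDiffAt
  have heuler : ∑ i, partialDeriv' i H x * partialDeriv' i (fun y => f (‖y‖ ^ 2)) x =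
      2 * deriv f (‖x‖ ^ 2) * (k * H x) := by
    simp only [partialDeriv'_comp_norm_sq (hf.differentiableAt two_ne_zero),
      ← fderiv_apply_self_of_homogeneous (hH.differentiableAt two_ne_zero) hhom,
      ← sum_mul_partialDeriv', Finset.mul_sum]
    exact Finset.sum_congr rfl fun i _ => by ring
  rw [lap_mul hH hg, hharm, heuler, lap_comp_norm_sq hf]
  ring

end Laplacian

/-- The separation-of-variables equivalence at the core of Theorem 6 ('superopl'):
`H·f(|x|²)` is an eigenfunction of `−½Δ + V(|x|²)` with eigenvalue `E` (away from the origin)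
iff `f` satisfies the radial ODE `−2u f″(u) − (2k+M) f′(u) + V(u) f(u) = E f(u)` on `(0,∞)`. -/
theorem stmt12 (M : ℕ) (hM : 1 ≤ M) (k : ℕ) (E : ℝ) (V : ℝ → ℝ)
    (f : ℝ → ℝ) (hf : ContDiffOn ℝ 2 f (Set.Ioi 0))
    (H : EuclideanSpace ℝ (Fin M) → ℝ) (hH0 : H ≠ 0)
    (hpoly : ∃ P : MvPolynomial (Fin M) ℝ, ∀ x, H x = MvPolynomial.eval (fun i => x i) P)
    (hhom : ∀ (c : ℝ) (x : EuclideanSpace ℝ (Fin M)), H (c • x) = c ^ k * H x)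
    (hharm : ∀ x, lap H x = 0) :
    (∀ x : EuclideanSpace ℝ (Fin M), x ≠ 0 →
        -(1 / 2) * lap (fun y => H y * f (‖y‖ ^ 2)) x
            + V (‖x‖ ^ 2) * (H x * f (‖x‖ ^ 2))
          = E * (H x * f (‖x‖ ^ 2)))
      ↔ (∀ u : ℝ, 0 < u →
        -2 * u * deriv (deriv f) u - (2 * (k : ℝ) + (M : ℝ)) * deriv f u + V u * f u
          = E * f u) := by
  obtain ⟨P, hP⟩ := hpoly
  have hH : ContDiff ℝ 2 H := funext hP ▸ P.contDiff_eval_euclideanSpace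
  have hlap (x : EuclideanSpace ℝ (Fin M)) (hx : x ≠ 0) :
      lap (fun y => H y * f (‖y‖ ^ 2)) x = H x * (4 * ‖x‖ ^ 2 * deriv (deriv f) (‖x‖ ^ 2)
        + (4 * k + 2 * M) * deriv f (‖x‖ ^ 2)) :=
    lap_mul_comp_norm_sq_of_harmonic_of_homogeneous hH.contDiffAt
      (hf.contDiffAt (Ioi_mem_nhds (by positivity))) (fun c => hhom c x) (hharm x)
  constructor
  · intro heigen u hu
    have : Nonempty (Fin M) := ⟨⟨0, hM⟩⟩
    obtain ⟨x, hxu, hHx⟩ := exists_norm_eq_and_ne_zero_of_homogeneous hhom hH0 (Real.sqrt_pos.2 hu)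
    have hx : x ≠ 0 := norm_pos_iff.1 (hxu ▸ Real.sqrt_pos.2 hu)
    have hnorm : ‖x‖ ^ 2 = u := by rw [hxu, Real.sq_sqrt hu.le]
    have h := heigen x hx
    rw [hlap x hx, hnorm] at h
    exact mul_left_cancel₀ hHx (by linear_combination h)
  · intro hradial x hx
    rw [hlap x hx]
    linear_combination H x * hradial (‖x‖ ^ 2) (by positivity)
end
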